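/- Let M be a semiprime Γ-ring and σ: M → M an endomorphism. Then σ is strong commutativity preserving on M if and only if there exists a map ζ: M → Z(M) into the center of M such that σ(x) = x + ζ(x) for all x ∈ M (equivalently, if and only if σ(x) − x ∈ Z(M) for all x ∈ M). -/
import Mathlib


/-- A Γ-ring in the sense of Barnes: additive abelian groups `M` and `Γ` with a
triadditive, associative product `M × Γ × M → M`. -/
structure GammaRing (M : Type*) (Γ : Type*) [AddCommGroup M] [AddCommGroup Γ] where
  tri : M → Γ → M → M
  add_left : ∀ (a b : M) (α : Γ) (c : M), tri (a + b) α c = tri a α c + tri b α c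
  add_mid : ∀ (a : M) (α β : Γ) (b : M), tri a (α + β) b = tri a α b + tri a β b
  add_right : ∀ (a : M) (α : Γ) (b c : M), tri a α (b + c) = tri a α b + tri a α c
  assoc : ∀ (a : M) (α : Γ) (b : M) (β : Γ) (c : M),
    tri (tri a α b) β c = tri a α (tri b β c)

namespace GammaRing

variable {M Γ : Type*} [AddCommGroup M] [AddCommGroup Γ]

/-- The commutator `[a,b]_α = aαb - bαa`. -/
def comm (G : GammaRing M Γ) (a : M) (α : Γ) (b : M) : M :=
  G.tri a α b - G.tri b α a

/-- The center `Z(M)`. -/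
def center (G : GammaRing M Γ) : Set M :=
  {a | ∀ (b : M) (α : Γ), G.tri a α b = G.tri b α a}

/-- A left derivation: additive with `δ(xαy) = xαδ(y) + yαδ(x)`. -/
def IsLeftDerivation (G : GammaRing M Γ) (δ : M → M) : Prop :=
  (∀ x y : M, δ (x + y) = δ x + δ y) ∧
  ∀ (x : M) (α : Γ) (y : M), δ (G.tri x α y) = G.tri x α (δ y) + G.tri y α (δ x)

/-- A derivation: additive with `μ(xαy) = μ(x)αy + xαμ(y)`. -/
def IsDerivation (G : GammaRing M Γ) (μ : M → M) : Prop :=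
  (∀ x y : M, μ (x + y) = μ x + μ y) ∧
  ∀ (x : M) (α : Γ) (y : M), μ (G.tri x α y) = G.tri (μ x) α y + G.tri x α (μ y)

/-- An endomorphism: additive with `σ(xαy) = σ(x)ασ(y)`. -/
def IsEndomorphism (G : GammaRing M Γ) (σ : M → M) : Prop :=
  (∀ x y : M, σ (x + y) = σ x + σ y) ∧
  ∀ (x : M) (α : Γ) (y : M), σ (G.tri x α y) = G.tri (σ x) α (σ y)

/-- Semiprime: `aΓMΓa = 0` implies `a = 0`. -/
def IsSemiprime (G : GammaRing M Γ) : Prop :=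
  ∀ a : M, (∀ (α : Γ) (m : M) (β : Γ), G.tri (G.tri a α m) β a = 0) → a = 0

/-- Prime: `aΓMΓb = 0` implies `a = 0` or `b = 0`. -/
def IsPrime (G : GammaRing M Γ) : Prop :=
  ∀ a b : M, (∀ (α : Γ) (m : M) (β : Γ), G.tri (G.tri a α m) β b = 0) → a = 0 ∨ b = 0

/-- Strong commutativity preserving: `[f(x),f(y)]_α = [x,y]_α`. -/
def IsSCP (G : GammaRing M Γ) (f : M → M) : Prop :=
  ∀ (x : M) (α : Γ) (y : M), G.comm (f x) α (f y) = G.comm x α y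

end GammaRing


namespace GammaRing

variable {M Γ : Type*} [AddCommGroup M] [AddCommGroup Γ] (G : GammaRing M Γ)

lemma tri_zero_left' (α : Γ) (c : M) : G.tri 0 α c = 0 := by
  have h := G.add_left 0 0 α c
  have h2 : (0 : M) + 0 = 0 := by abel
  rw [h2] at h
  have h3 : G.tri 0 α c + 0 = G.tri 0 α c + G.tri 0 α c := by rw [add_zero]; exact h
  exact (add_left_cancel h3).symm

lemma tri_zero_right' (a : M) (α : Γ) : G.tri a α 0 = 0 := by
  have h := G.add_right a α 0 0
  have h2 : (0 : M) + 0 = 0 := by abel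
  rw [h2] at h
  have h3 : G.tri a α 0 + 0 = G.tri a α 0 + G.tri a α 0 := by rw [add_zero]; exact h
  exact (add_left_cancel h3).symm

lemma tri_sub_left' (a b : M) (α : Γ) (c : M) :
    G.tri (a - b) α c = G.tri a α c - G.tri b α c := by
  have h := G.add_left (a - b) b α c
  have h2 : a - b + b = a := by abel
  rw [h2] at h
  have h3 : G.tri (a - b) α c - (G.tri a α c - G.tri b α c)
      = (G.tri (a - b) α c + G.tri b α c) - G.tri a α c := by abel
  have h4 : G.tri (a - b) α c - (G.tri a α c - G.tri b α c) = 0 := by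
    rw [h3, ← h]; abel
  exact sub_eq_zero.mp h4

lemma tri_sub_right' (a : M) (α : Γ) (b c : M) :
    G.tri a α (b - c) = G.tri a α b - G.tri a α c := by
  have h := G.add_right a α (b - c) c
  have h2 : b - c + c = b := by abel
  rw [h2] at h
  have h3 : G.tri a α (b - c) - (G.tri a α b - G.tri a α c)
      = (G.tri a α (b - c) + G.tri a α c) - G.tri a α b := by abel
  have h4 : G.tri a α (b - c) - (G.tri a α b - G.tri a α c) = 0 := by
    rw [h3, ← h]; abel
  exact sub_eq_zero.mp h4

set_option maxHeartbeats 4000000 in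
/-- In a semiprime Γ-ring, an element commuting (in every Greek letter) with all
commutators is central. -/
lemma central_of_comm_with_commutators (hsp : G.IsSemiprime) (a : M)
    (h : ∀ (ν : Γ) (z : M) (β : Γ) (w : M),
      G.tri a ν (G.comm z β w) = G.tri (G.comm z β w) ν a) :
    a ∈ G.center := by
  have hz : ∀ (ν : Γ) (z : M) (β : Γ) (w : M),
      G.tri a ν (G.comm z β w) - G.tri (G.comm z β w) ν a = 0 :=
    fun ν z β w => sub_eq_zero.mpr (h ν z β w)
  intro x mu
  have hs : G.comm a mu x = 0 := by
    apply hsp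
    intro del z eps
    have key : G.tri (G.tri (G.comm a mu x) del z) eps (G.comm a mu x) =
        -(G.tri (G.tri a mu (G.comm z eps x) - G.tri (G.comm z eps x) mu a) del (G.tri x mu a))
        - (G.tri (G.tri a eps (G.comm z mu x) - G.tri (G.comm z mu x) eps a) del (G.tri x mu a))
        + (G.tri (G.tri a eps (G.comm z del x) - G.tri (G.comm z del x) eps a) mu (G.tri x mu a))
        + (G.tri (G.tri a mu (G.comm z mu (G.tri x eps x)) - G.tri (G.comm z mu (G.tri x eps x)) mu a) del a)
        - (2 : ℤ) • (G.tri (G.tri a del (G.comm z mu (G.tri x eps x)) - G.tri (G.comm z mu (G.tri x eps x)) del a) mu a)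
        - (G.tri (G.tri a eps (G.comm z del (G.tri x mu x)) - G.tri (G.comm z del (G.tri x mu x)) eps a) mu a)
        - (2 : ℤ) • (G.tri a mu (G.comm z eps (G.tri x mu (G.tri x del a))) - G.tri (G.comm z eps (G.tri x mu (G.tri x del a))) mu a)
        + (2 : ℤ) • (G.tri a mu (G.comm (G.tri z mu x) eps (G.tri x del a)) - G.tri (G.comm (G.tri z mu x) eps (G.tri x del a)) mu a)
        + (2 : ℤ) • (G.tri a mu (G.comm (G.tri z eps x) mu (G.tri x del a)) - G.tri (G.comm (G.tri z eps x) mu (G.tri x del a)) mu a)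
        - (G.tri a del (G.comm (G.tri z eps x) mu (G.tri x mu a)) - G.tri (G.comm (G.tri z eps x) mu (G.tri x mu a)) del a)
        + (G.tri a eps (G.comm (G.tri z del x) mu (G.tri x mu a)) - G.tri (G.comm (G.tri z del x) mu (G.tri x mu a)) eps a)
        + (G.tri a mu (G.comm (G.tri z del (G.tri x eps x)) mu a) - G.tri (G.comm (G.tri z del (G.tri x eps x)) mu a) mu a)
        - (G.tri a mu (G.comm (G.tri z eps (G.tri x del x)) mu a) - G.tri (G.comm (G.tri z eps (G.tri x del x)) mu a) mu a)
        + (G.tri z del (G.tri a mu (G.comm x mu (G.tri x eps a)) - G.tri (G.comm x mu (G.tri x eps a)) mu a))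
        + (2 : ℤ) • (G.tri a mu (G.comm a mu (G.tri x del (G.tri x eps z))) - G.tri (G.comm a mu (G.tri x del (G.tri x eps z))) mu a)
        - (G.tri a mu (G.comm a del (G.tri x mu (G.tri x eps z))) - G.tri (G.comm a del (G.tri x mu (G.tri x eps z))) mu a)
        + (2 : ℤ) • (G.tri a mu (G.comm a del (G.tri x eps (G.tri x mu z))) - G.tri (G.comm a del (G.tri x eps (G.tri x mu z))) mu a)
        + (G.tri a eps (G.comm a mu (G.tri x mu (G.tri x del z))) - G.tri (G.comm a mu (G.tri x mu (G.tri x del z))) eps a)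
        + (G.tri (G.tri a mu (G.comm (G.tri a del x) eps x) - G.tri (G.comm (G.tri a del x) eps x) mu a) mu z)
        - (4 : ℤ) • (G.tri a mu (G.tri a mu (G.comm x del (G.tri x eps z)) - G.tri (G.comm x del (G.tri x eps z)) mu a))
        + (2 : ℤ) • (G.tri a mu (G.tri a del (G.comm (G.tri x mu x) eps z) - G.tri (G.comm (G.tri x mu x) eps z) del a))
        - (G.tri a eps (G.tri a mu (G.comm (G.tri x mu x) del z) - G.tri (G.comm (G.tri x mu x) del z) mu a))
        + (G.tri (G.tri a mu (G.comm z del (G.tri a mu x)) - G.tri (G.comm z del (G.tri a mu x)) mu a) eps x)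
        - (G.tri a mu (G.comm z eps (G.tri a del (G.tri x mu x))) - G.tri (G.comm z eps (G.tri a del (G.tri x mu x))) mu a)
        + (G.tri (G.tri a eps (G.comm (G.tri z mu a) mu x) - G.tri (G.comm (G.tri z mu a) mu x) eps a) del x)
        - (G.tri a mu (G.comm (G.tri z del (G.tri a mu x)) eps x) - G.tri (G.comm (G.tri z del (G.tri a mu x)) eps x) mu a)
        - (G.tri z del (G.tri (G.tri a eps (G.comm a mu x) - G.tri (G.comm a mu x) eps a) mu x))
        - (G.tri (G.tri a mu (G.comm a eps x) - G.tri (G.comm a eps x) mu a) mu (G.tri z del x))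
        - (2 : ℤ) • (G.tri (G.tri a del (G.comm a mu (G.tri x eps z)) - G.tri (G.comm a mu (G.tri x eps z)) del a) mu x)
        + (G.tri a mu (G.comm a del (G.tri x mu (G.tri z eps x))) - G.tri (G.comm a del (G.tri x mu (G.tri z eps x))) mu a)
        - (G.tri a eps (G.comm a mu (G.tri x del (G.tri z mu x))) - G.tri (G.comm a mu (G.tri x del (G.tri z mu x))) eps a)
        + (G.tri (G.tri a eps (G.comm (G.tri a mu x) mu z) - G.tri (G.comm (G.tri a mu x) mu z) eps a) del x)
        - (G.tri a mu (G.comm (G.tri a del x) mu (G.tri z eps x)) - G.tri (G.comm (G.tri a del x) mu (G.tri z eps x)) mu a)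
        - (G.tri a del (G.comm (G.tri a mu x) mu (G.tri z eps x)) - G.tri (G.comm (G.tri a mu x) mu (G.tri z eps x)) del a)
        - (G.tri a eps (G.comm (G.tri a mu x) mu (G.tri z del x)) - G.tri (G.comm (G.tri a mu x) mu (G.tri z del x)) eps a)
        + (G.tri a eps (G.comm (G.tri a mu (G.tri x mu z)) del x) - G.tri (G.comm (G.tri a mu (G.tri x mu z)) del x) eps a)
        + (G.tri a mu (G.tri (G.tri a mu (G.comm x del z) - G.tri (G.comm x del z) mu a) eps x))
        - (G.tri a mu (G.tri (G.tri a eps (G.comm x mu z) - G.tri (G.comm x mu z) eps a) del x))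
        - (G.tri a mu (G.tri (G.tri a eps (G.comm x del z) - G.tri (G.comm x del z) eps a) mu x))
        + (G.tri a eps (G.tri (G.tri a mu (G.comm x del z) - G.tri (G.comm x del z) mu a) mu x))
        - (2 : ℤ) • (G.tri a mu (G.tri a mu (G.comm x eps (G.tri z del x)) - G.tri (G.comm x eps (G.tri z del x)) mu a))
        + (3 : ℤ) • (G.tri a mu (G.tri a del (G.comm (G.tri x eps z) mu x) - G.tri (G.comm (G.tri x eps z) mu x) del a))
        + (2 : ℤ) • (G.tri a del (G.tri a mu (G.comm (G.tri x eps z) mu x) - G.tri (G.comm (G.tri x eps z) mu x) mu a))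
        + (G.tri (G.tri a mu x) del (G.tri a mu (G.comm z eps x) - G.tri (G.comm z eps x) mu a))
        - (3 : ℤ) • (G.tri a del (G.comm a mu (G.tri z eps (G.tri x mu x))) - G.tri (G.comm a mu (G.tri z eps (G.tri x mu x))) del a)
        - (G.tri (G.tri a mu (G.comm (G.tri a eps z) mu x) - G.tri (G.comm (G.tri a eps z) mu x) mu a) del x)
        + (2 : ℤ) • (G.tri a mu (G.comm (G.tri a mu z) eps (G.tri x del x)) - G.tri (G.comm (G.tri a mu z) eps (G.tri x del x)) mu a)
        + (2 : ℤ) • (G.tri a mu (G.comm (G.tri a del z) eps (G.tri x mu x)) - G.tri (G.comm (G.tri a del z) eps (G.tri x mu x)) mu a)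
        - (2 : ℤ) • (G.tri a mu (G.comm (G.tri a mu (G.tri z eps x)) del x) - G.tri (G.comm (G.tri a mu (G.tri z eps x)) del x) mu a)
        + (G.tri a mu (G.tri (G.tri a mu (G.comm z eps x) - G.tri (G.comm z eps x) mu a) del x))
        + (G.tri a eps (G.tri (G.tri a mu (G.comm z mu x) - G.tri (G.comm z mu x) mu a) del x))
        - (2 : ℤ) • (G.tri a mu (G.tri a mu (G.comm z eps (G.tri x del x)) - G.tri (G.comm z eps (G.tri x del x)) mu a))
        + (3 : ℤ) • (G.tri a mu (G.tri a del (G.comm z mu (G.tri x eps x)) - G.tri (G.comm z mu (G.tri x eps x)) del a))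
        - (G.tri a eps (G.tri a mu (G.comm z mu (G.tri x del x)) - G.tri (G.comm z mu (G.tri x del x)) mu a))
        - (G.tri a mu (G.tri a eps (G.comm (G.tri z del x) mu x) - G.tri (G.comm (G.tri z del x) mu x) eps a))
        - (G.tri (G.tri a mu (G.comm x del a) - G.tri (G.comm x del a) mu a) mu (G.tri x eps z))
        + (G.tri (G.tri a eps (G.comm x del (G.tri a mu x)) - G.tri (G.comm x del (G.tri a mu x)) eps a) mu z)
        + (3 : ℤ) • (G.tri a mu (G.comm (G.tri x del a) mu (G.tri x eps z)) - G.tri (G.comm (G.tri x del a) mu (G.tri x eps z)) mu a)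
        - (G.tri a mu (G.comm (G.tri x del (G.tri a mu x)) eps z) - G.tri (G.comm (G.tri x del (G.tri a mu x)) eps z) mu a)
        + (G.tri a mu (G.comm (G.tri x eps (G.tri a del x)) mu z) - G.tri (G.comm (G.tri x eps (G.tri a del x)) mu z) mu a)
        + (G.tri x eps (G.tri a mu (G.comm a mu (G.tri x del z)) - G.tri (G.comm a mu (G.tri x del z)) mu a))
        + (G.tri x mu (G.tri a mu (G.comm (G.tri a del x) eps z) - G.tri (G.comm (G.tri a del x) eps z) mu a))
        - (G.tri x del (G.tri a mu (G.comm (G.tri a eps x) mu z) - G.tri (G.comm (G.tri a eps x) mu z) mu a))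
        + (G.tri (G.tri x eps a) mu (G.tri a del (G.comm x mu z) - G.tri (G.comm x mu z) del a))
        - (2 : ℤ) • (G.tri (G.tri a del (G.comm x mu (G.tri x eps z)) - G.tri (G.comm x mu (G.tri x eps z)) del a) mu a)
        + (G.tri (G.tri a eps (G.comm x del (G.tri x mu z)) - G.tri (G.comm x del (G.tri x mu z)) eps a) mu a)
        + (G.tri a mu (G.comm x del (G.tri x eps (G.tri z mu a))) - G.tri (G.comm x del (G.tri x eps (G.tri z mu a))) mu a)
        + (G.tri (G.tri a mu (G.comm (G.tri x mu x) del z) - G.tri (G.comm (G.tri x mu x) del z) mu a) eps a)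
        + (3 : ℤ) • (G.tri (G.tri a mu (G.comm (G.tri x mu x) eps z) - G.tri (G.comm (G.tri x mu x) eps z) mu a) del a)
        - (G.tri a mu (G.comm (G.tri x mu x) del (G.tri z eps a)) - G.tri (G.comm (G.tri x mu x) del (G.tri z eps a)) mu a)
        + (G.tri x del (G.tri a mu (G.comm x eps (G.tri z mu a)) - G.tri (G.comm x eps (G.tri z mu a)) mu a))
        + (G.tri x eps (G.tri a mu (G.comm x mu (G.tri z del a)) - G.tri (G.comm x mu (G.tri z del a)) mu a))
        + (G.tri x eps (G.tri a mu (G.comm x del (G.tri z mu a)) - G.tri (G.comm x del (G.tri z mu a)) mu a))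
        + (G.tri x eps (G.tri a del (G.comm x mu (G.tri z mu a)) - G.tri (G.comm x mu (G.tri z mu a)) del a))
        + (G.tri x mu (G.tri a mu (G.comm (G.tri x eps z) del a) - G.tri (G.comm (G.tri x eps z) del a) mu a))
        - (G.tri x del (G.tri a mu (G.comm (G.tri x mu z) eps a) - G.tri (G.comm (G.tri x mu z) eps a) mu a))
        - (G.tri (G.tri a mu (G.comm x del z) - G.tri (G.comm x del z) mu a) mu (G.tri x eps a))
        + (3 : ℤ) • (G.tri (G.tri a mu (G.comm x eps z) - G.tri (G.comm x eps z) mu a) mu (G.tri x del a))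
        - (G.tri (G.tri a mu (G.comm x mu (G.tri z eps x)) - G.tri (G.comm x mu (G.tri z eps x)) mu a) del a)
        + (G.tri a mu (G.comm x mu (G.tri z del (G.tri x eps a))) - G.tri (G.comm x mu (G.tri z del (G.tri x eps a))) mu a)
        + (G.tri a mu (G.comm x mu (G.tri z eps (G.tri x del a))) - G.tri (G.comm x mu (G.tri z eps (G.tri x del a))) mu a)
        + (G.tri a mu (G.comm x del (G.tri z mu (G.tri x eps a))) - G.tri (G.comm x del (G.tri z mu (G.tri x eps a))) mu a)
        + (G.tri a eps (G.comm x mu (G.tri z del (G.tri x mu a))) - G.tri (G.comm x mu (G.tri z del (G.tri x mu a))) eps a)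
        - (G.tri (G.tri a mu (G.comm (G.tri x del z) mu x) - G.tri (G.comm (G.tri x del z) mu x) mu a) eps a)
        + (3 : ℤ) • (G.tri (G.tri a mu (G.comm (G.tri x eps z) mu x) - G.tri (G.comm (G.tri x eps z) mu x) mu a) del a)
        - (3 : ℤ) • (G.tri a del (G.comm (G.tri x eps z) mu (G.tri x mu a)) - G.tri (G.comm (G.tri x eps z) mu (G.tri x mu a)) del a)
        + (G.tri x eps (G.tri (G.tri a del (G.comm z mu x) - G.tri (G.comm z mu x) del a) mu a))
        - (G.tri x del (G.tri a mu (G.comm z mu (G.tri x eps a)) - G.tri (G.comm z mu (G.tri x eps a)) mu a))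
        + (G.tri x mu (G.tri a del (G.comm (G.tri z eps x) mu a) - G.tri (G.comm (G.tri z eps x) mu a) del a))
        - (G.tri x mu (G.tri a eps (G.comm (G.tri z del x) mu a) - G.tri (G.comm (G.tri z del x) mu a) eps a))
        - (3 : ℤ) • (G.tri (G.tri a mu (G.comm x eps z) - G.tri (G.comm x eps z) mu a) del (G.tri a mu x))
        - (2 : ℤ) • (G.tri a del (G.comm (G.tri x eps z) mu (G.tri a mu x)) - G.tri (G.comm (G.tri x eps z) mu (G.tri a mu x)) del a)
        + (G.tri a eps (G.comm (G.tri x del (G.tri z mu a)) mu x) - G.tri (G.comm (G.tri x del (G.tri z mu a)) mu x) eps a)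
        + (G.tri x del (G.tri a mu (G.comm z eps (G.tri a mu x)) - G.tri (G.comm z eps (G.tri a mu x)) mu a))
        + (G.tri x eps (G.tri a mu (G.comm z mu (G.tri a del x)) - G.tri (G.comm z mu (G.tri a del x)) mu a))
        - (G.tri (G.tri a mu (G.comm x eps a) - G.tri (G.comm x eps a) mu a) del (G.tri z mu x))
        - (G.tri (G.tri a del (G.comm x mu a) - G.tri (G.comm x mu a) del a) mu (G.tri z eps x))
        + (G.tri (G.tri a eps (G.comm x del (G.tri a mu z)) - G.tri (G.comm x del (G.tri a mu z)) eps a) mu x)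
        + (3 : ℤ) • (G.tri a mu (G.comm x eps (G.tri a del (G.tri z mu x))) - G.tri (G.comm x eps (G.tri a del (G.tri z mu x))) mu a)
        + (G.tri (G.tri a eps (G.comm (G.tri x mu a) del z) - G.tri (G.comm (G.tri x mu a) del z) eps a) mu x)
        - (2 : ℤ) • (G.tri a mu (G.comm (G.tri x eps (G.tri a del z)) mu x) - G.tri (G.comm (G.tri x eps (G.tri a del z)) mu x) mu a)
        - (G.tri a eps (G.comm (G.tri x del (G.tri a mu z)) mu x) - G.tri (G.comm (G.tri x del (G.tri a mu z)) mu x) eps a)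
        - (G.tri x mu (G.tri (G.tri a eps (G.comm a mu z) - G.tri (G.comm a mu z) eps a) del x))
        - (G.tri x eps (G.tri (G.tri a del (G.comm a mu z) - G.tri (G.comm a mu z) del a) mu x))
        + (G.tri (G.tri x eps a) mu (G.tri a mu (G.comm z del x) - G.tri (G.comm z del x) mu a))
        + (2 : ℤ) • (G.tri a del (G.comm z eps (G.tri x mu (G.tri a mu x))) - G.tri (G.comm z eps (G.tri x mu (G.tri a mu x))) del a)
        - (3 : ℤ) • (G.tri (G.tri a del (G.comm (G.tri z eps x) mu a) - G.tri (G.comm (G.tri z eps x) mu a) del a) mu x)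
        + (3 : ℤ) • (G.tri a mu (G.comm (G.tri z mu x) eps (G.tri a del x)) - G.tri (G.comm (G.tri z mu x) eps (G.tri a del x)) mu a)
        - (G.tri a mu (G.comm (G.tri z del x) mu (G.tri a eps x)) - G.tri (G.comm (G.tri z del x) mu (G.tri a eps x)) mu a)
        + (G.tri a mu (G.comm (G.tri z del x) eps (G.tri a mu x)) - G.tri (G.comm (G.tri z del x) eps (G.tri a mu x)) mu a)
        - (G.tri z del (G.tri a eps (G.comm x mu (G.tri a mu x)) - G.tri (G.comm x mu (G.tri a mu x)) eps a))
        + (G.tri z del (G.tri a mu (G.comm (G.tri x mu a) eps x) - G.tri (G.comm (G.tri x mu a) eps x) mu a))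
        - (2 : ℤ) • (G.tri a mu (G.comm x mu (G.tri x del (G.tri a eps z))) - G.tri (G.comm x mu (G.tri x del (G.tri a eps z))) mu a)
        + (G.tri a mu (G.comm x del (G.tri x mu (G.tri a eps z))) - G.tri (G.comm x del (G.tri x mu (G.tri a eps z))) mu a)
        + (G.tri a mu (G.comm x del (G.tri x eps (G.tri a mu z))) - G.tri (G.comm x del (G.tri x eps (G.tri a mu z))) mu a)
        - (G.tri a eps (G.comm (G.tri x mu x) del (G.tri a mu z)) - G.tri (G.comm (G.tri x mu x) del (G.tri a mu z)) eps a)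
        - (G.tri a mu (G.comm (G.tri x del (G.tri x mu a)) eps z) - G.tri (G.comm (G.tri x del (G.tri x mu a)) eps z) mu a)
        + (G.tri a del (G.comm (G.tri x eps (G.tri x mu a)) mu z) - G.tri (G.comm (G.tri x eps (G.tri x mu a)) mu z) del a)
        - (G.tri x eps (G.tri a del (G.comm x mu (G.tri a mu z)) - G.tri (G.comm x mu (G.tri a mu z)) del a)) := by
      simp only [GammaRing.comm, tri_sub_left', tri_sub_right', G.assoc, smul_sub]
      abel
    rw [key]
    simp only [hz, tri_zero_left', tri_zero_right', smul_zero, add_zero, zero_add,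
      neg_zero, sub_zero, zero_sub, neg_neg, sub_self]
    try abel
  have hs2 : G.tri a mu x - G.tri x mu a = 0 := hs
  exact sub_eq_zero.mp hs2

end GammaRing

set_option maxHeartbeats 1000000 in
/-- An endomorphism of a semiprime Γ-ring is scp iff it is the identity plus a
central-valued map. -/
theorem semiprime_scp_endomorphism_iff {M Γ : Type*}
    [AddCommGroup M] [AddCommGroup Γ] (G : GammaRing M Γ) (hsp : G.IsSemiprime)
    (σ : M → M) (hσ : G.IsEndomorphism σ) :
    G.IsSCP σ ↔ ∃ ζ : M → M, (∀ x, ζ x ∈ G.center) ∧ ∀ x, σ x = x + ζ x := by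
  constructor
  · intro hscp
    refine ⟨fun x => σ x - x, fun x => ?_, fun x => by show σ x = x + (σ x - x); abel⟩
    show σ x - x ∈ G.center
    have hsub : ∀ u v : M, σ (u - v) = σ u - σ v := by
      intro u v
      have h1 := hσ.1 (u - v) v
      have h2 : u - v + v = u := by abel
      rw [h2] at h1
      have h3 : σ (u - v) - (σ u - σ v) = (σ (u - v) + σ v) - σ u := by abel
      have h4 : σ (u - v) - (σ u - σ v) = 0 := by rw [h3, ← h1]; abel
      exact sub_eq_zero.mp h4
    apply G.central_of_comm_with_commutators hsp
    intro ν z β w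
    have hfix : σ (G.comm z β w) = G.comm z β w := by
      have : σ (G.comm z β w) = G.comm (σ z) β (σ w) := by
        show σ (G.tri z β w - G.tri w β z) = _
        rw [hsub, hσ.2, hσ.2]; rfl
      rw [this, hscp]
    have h1 := hscp x ν (G.comm z β w)
    rw [hfix] at h1
    have h2 : G.tri (σ x) ν (G.comm z β w) - G.tri (G.comm z β w) ν (σ x)
        = G.tri x ν (G.comm z β w) - G.tri (G.comm z β w) ν x := h1
    rw [G.tri_sub_left', G.tri_sub_right']
    have h3 : G.tri (σ x) ν (G.comm z β w) - G.tri x ν (G.comm z β w) -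
        (G.tri (G.comm z β w) ν (σ x) - G.tri (G.comm z β w) ν x)
        = (G.tri (σ x) ν (G.comm z β w) - G.tri (G.comm z β w) ν (σ x)) -
          (G.tri x ν (G.comm z β w) - G.tri (G.comm z β w) ν x) := by abel
    have h4 : G.tri (σ x) ν (G.comm z β w) - G.tri x ν (G.comm z β w) -
        (G.tri (G.comm z β w) ν (σ x) - G.tri (G.comm z β w) ν x) = 0 := by
      rw [h3, h2]; abel
    exact sub_eq_zero.mp h4
  · rintro ⟨ζ, hc, he⟩ x α y
    rw [he x, he y]
    show G.tri (x + ζ x) α (y + ζ y) - G.tri (y + ζ y) α (x + ζ x)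
        = G.tri x α y - G.tri y α x
    simp only [G.add_left, G.add_right, (hc x) y α, (hc x) (ζ y) α, (hc y) x α]
    abel
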